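/- arXiv:1605.08997 — 2 statements merged into one kernel-verified Lean document; each statement's English description precedes it below -/
import Mathlib

section
/- With the hypotheses of the gluing lemma for line subsheaves: if (L, f) and (L', f') are two pairs consisting of a line bundle with an injective map into E such that each restricts over every U_i to (L_i, f_i) up to isomorphism, then there exists a unique O_Y-linear isomorphism φ : L' → L with f' = f ∘ φ. -/
open TopologicalSpace

universe u v

variable (Y : Type u) [TopologicalSpace Y]

/-- A presheaf of commutative rings on a topological space, given concretely by its rings of
sections and restriction maps. -/
structure RingPresheaf where
  R : Opens Y → Type v
  ring : ∀ U, CommRing (R U)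
  res : ∀ {U V : Opens Y}, V ≤ U → (R U →+* R V)
  res_id : ∀ (U : Opens Y) (x : R U), res le_rfl x = x
  res_comp : ∀ {U V W : Opens Y} (hWV : W ≤ V) (hVU : V ≤ U) (x : R U),
    res hWV (res hVU x) = res (hWV.trans hVU) x

attribute [instance] RingPresheaf.ring

variable {Y}

/-- The sheaf condition for a presheaf of rings. -/
structure RingPresheaf.IsSheaf (𝒪 : RingPresheaf Y) : Prop where
  locality : ∀ (U : Opens Y) (𝒰 : Set (Opens Y)) (h𝒰 : ∀ V ∈ 𝒰, V ≤ U), U ≤ sSup 𝒰 →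
    ∀ x y : 𝒪.R U, (∀ V (hV : V ∈ 𝒰), 𝒪.res (h𝒰 V hV) x = 𝒪.res (h𝒰 V hV) y) → x = y
  gluing : ∀ (U : Opens Y) (𝒰 : Set (Opens Y)) (h𝒰 : ∀ V ∈ 𝒰, V ≤ U), U ≤ sSup 𝒰 →
    ∀ s : ∀ V ∈ 𝒰, 𝒪.R V,
      (∀ V hV W hW, 𝒪.res (inf_le_left : V ⊓ W ≤ V) (s V hV) =
        𝒪.res (inf_le_right : V ⊓ W ≤ W) (s W hW)) →
      ∃ x : 𝒪.R U, ∀ V hV, 𝒪.res (h𝒰 V hV) x = s V hV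

/-- A sheaf of `𝒪`-modules on the open subset `U₀` of `Y`, given concretely by its modules of
sections over the open subsets of `U₀`, together with (semilinear) restriction maps, subject
to the sheaf condition. -/
structure ModSheafOn (𝒪 : RingPresheaf Y) (U₀ : Opens Y) where
  M : ∀ V : Opens Y, V ≤ U₀ → Type v
  ab : ∀ V h, AddCommGroup (M V h)
  mod : ∀ V h, Module (𝒪.R V) (M V h)
  res : ∀ {U V : Opens Y} (hU : U ≤ U₀) (hVU : V ≤ U), M U hU →+ M V (hVU.trans hU)
  res_id : ∀ (V : Opens Y) (h : V ≤ U₀) (x : M V h), res h le_rfl x = x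
  res_comp : ∀ {U V W : Opens Y} (hU : U ≤ U₀) (hVU : V ≤ U) (hWV : W ≤ V) (x : M U hU),
    res (hVU.trans hU) hWV (res hU hVU x) = res hU (hWV.trans hVU) x
  res_smul : ∀ {U V : Opens Y} (hU : U ≤ U₀) (hVU : V ≤ U) (r : 𝒪.R U) (x : M U hU),
    res hU hVU (r • x) = 𝒪.res hVU r • res hU hVU x
  locality : ∀ (U : Opens Y) (hU : U ≤ U₀) (𝒰 : Set (Opens Y)) (h𝒰 : ∀ V ∈ 𝒰, V ≤ U),
    U ≤ sSup 𝒰 → ∀ x y : M U hU,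
      (∀ V (hV : V ∈ 𝒰), res hU (h𝒰 V hV) x = res hU (h𝒰 V hV) y) → x = y
  gluing : ∀ (U : Opens Y) (hU : U ≤ U₀) (𝒰 : Set (Opens Y)) (h𝒰 : ∀ V ∈ 𝒰, V ≤ U),
    U ≤ sSup 𝒰 → ∀ s : ∀ V (hV : V ∈ 𝒰), M V ((h𝒰 V hV).trans hU),
      (∀ V hV W hW, res ((h𝒰 V hV).trans hU) (inf_le_left : V ⊓ W ≤ V) (s V hV) =
        res ((h𝒰 W hW).trans hU) (inf_le_right : V ⊓ W ≤ W) (s W hW)) →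
      ∃ x : M U hU, ∀ V hV, res hU (h𝒰 V hV) x = s V hV

attribute [instance] ModSheafOn.ab ModSheafOn.mod

variable {𝒪 : RingPresheaf Y} {U₀ : Opens Y}

/-- A morphism, over the open subset `U₀`, from a sheaf of `𝒪`-modules on `U₀` to (the
restriction to `U₀` of) a sheaf of `𝒪`-modules on all of `Y`. -/
structure HomOn (L : ModSheafOn 𝒪 U₀) (E : ModSheafOn 𝒪 (⊤ : Opens Y)) where
  app : ∀ (V : Opens Y) (h : V ≤ U₀), L.M V h →ₗ[𝒪.R V] E.M V le_top
  naturality : ∀ {U V : Opens Y} (hU : U ≤ U₀) (hVU : V ≤ U) (x : L.M U hU),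
    app V (hVU.trans hU) (L.res hU hVU x) = E.res le_top hVU (app U hU x)

/-- An isomorphism, over the open subset `U₀`, from (the restriction to `U₀` of) a global
sheaf of `𝒪`-modules `L` to a sheaf of `𝒪`-modules `L'` on `U₀`. -/
structure IsoOn (L : ModSheafOn 𝒪 (⊤ : Opens Y)) (L' : ModSheafOn 𝒪 U₀) where
  app : ∀ (V : Opens Y) (h : V ≤ U₀), L.M V le_top ≃ₗ[𝒪.R V] L'.M V h
  naturality : ∀ {U V : Opens Y} (hU : U ≤ U₀) (hVU : V ≤ U) (x : L.M U le_top),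
    app V (hVU.trans hU) (L.res le_top hVU x) = L'.res hU hVU (app U hU x)

/-- A sheaf of `𝒪`-modules on `U₀` is a line bundle (invertible module) if it is locally
isomorphic to `𝒪`. -/
def IsLineBundleOn (L : ModSheafOn 𝒪 U₀) : Prop :=
  ∀ y : Y, y ∈ U₀ → ∃ (W : Opens Y) (hW : W ≤ U₀), y ∈ W ∧
    ∃ e : ∀ (V : Opens Y) (hV : V ≤ W), L.M V (hV.trans hW) ≃ₗ[𝒪.R V] 𝒪.R V,
      ∀ (U V : Opens Y) (hU : U ≤ W) (hVU : V ≤ U) (x : L.M U (hU.trans hW)),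
        e V (hVU.trans hU) (L.res (hU.trans hW) hVU x) = 𝒪.res hVU (e U hU x)

/-- A morphism of sheaves of modules is injective if it is injective on all sections. -/
def HomOn.Injective {L : ModSheafOn 𝒪 U₀} {E : ModSheafOn 𝒪 ⊤} (f : HomOn L E) : Prop :=
  ∀ (V : Opens Y) (h : V ≤ U₀), Function.Injective (f.app V h)

/-! Two injective maps into `E` with the same image differ by a unique isomorphism. Images are
subsheaves of `E`, so it suffices to compare them over the cover `U i`, where both pairs are
`(L i, f i)` up to isomorphism. -/

section LinearAlgebra

variable {R M N P : Type*} [Semiring R] [AddCommMonoid M] [AddCommMonoid N] [AddCommMonoid P]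
  [Module R M] [Module R N] [Module R P]

noncomputable def LinearEquiv.ofRangeEq {f : M →ₗ[R] P} {g : N →ₗ[R] P}
    (hf : Function.Injective f) (hg : Function.Injective g)
    (h : LinearMap.range g = LinearMap.range f) : N ≃ₗ[R] M :=
  (LinearEquiv.ofInjective g hg).trans
    ((LinearEquiv.ofEq _ _ h).trans (LinearEquiv.ofInjective f hf).symm)

@[simp]
theorem LinearEquiv.apply_ofRangeEq {f : M →ₗ[R] P} {g : N →ₗ[R] P}
    (hf : Function.Injective f) (hg : Function.Injective g)
    (h : LinearMap.range g = LinearMap.range f) (x : N) :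
    f (LinearEquiv.ofRangeEq hf hg h x) = g x := by
  simp [LinearEquiv.ofRangeEq]

end LinearAlgebra

section SubsheafImage

variable {E A B : ModSheafOn 𝒪 (⊤ : Opens Y)}

def HomOn.RestrictsTo (fA : HomOn A E) (Li : ModSheafOn 𝒪 U₀) (fi : HomOn Li E) : Prop :=
  ∃ h : IsoOn A Li, ∀ (V : Opens Y) (hV : V ≤ U₀) (x : A.M V le_top),
    fA.app V le_top x = fi.app V hV (h.app V hV x)

theorem HomOn.RestrictsTo.range_le {fA : HomOn A E} {fB : HomOn B E}
    {Li : ModSheafOn 𝒪 U₀} {fi : HomOn Li E}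
    (hA : fA.RestrictsTo Li fi) (hB : fB.RestrictsTo Li fi) (W : Opens Y) (hW : W ≤ U₀) :
    LinearMap.range (fB.app W le_top) ≤ LinearMap.range (fA.app W le_top) := by
  obtain ⟨eA, hfA⟩ := hA
  obtain ⟨eB, hfB⟩ := hB
  rintro _ ⟨x, rfl⟩
  refine ⟨(eA.app W hW).symm (eB.app W hW x), ?_⟩
  rw [hfA W hW, LinearEquiv.apply_symm_apply, ← hfB W hW]

theorem HomOn.mem_range_of_forall_res_mem_range {fA : HomOn A E} (hfA : fA.Injective)
    {V : Opens Y} (𝒰 : Set (Opens Y)) (h𝒰 : ∀ W ∈ 𝒰, W ≤ V) (hV : V ≤ sSup 𝒰)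
    (e : E.M V le_top)
    (he : ∀ W (hW : W ∈ 𝒰), E.res le_top (h𝒰 W hW) e ∈ LinearMap.range (fA.app W le_top)) :
    e ∈ LinearMap.range (fA.app V le_top) := by
  choose s hs using he
  have compat : ∀ W (hW : W ∈ 𝒰) W' (hW' : W' ∈ 𝒰),
      A.res le_top (inf_le_left : W ⊓ W' ≤ W) (s W hW) =
        A.res le_top (inf_le_right : W ⊓ W' ≤ W') (s W' hW') := by
    intro W hW W' hW'
    apply hfA (W ⊓ W') le_top
    rw [fA.naturality, fA.naturality, hs, hs, E.res_comp, E.res_comp]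
  obtain ⟨y, hy⟩ := A.gluing V le_top 𝒰 h𝒰 hV s compat
  refine ⟨y, E.locality V le_top 𝒰 h𝒰 hV _ _ fun W hW => ?_⟩
  rw [← fA.naturality, hy W hW, hs W hW]

theorem HomOn.range_le_of_restrictsTo {ι : Type*} {U : ι → Opens Y} (hcov : iSup U = ⊤)
    {L : ∀ i, ModSheafOn 𝒪 (U i)} {f : ∀ i, HomOn (L i) E}
    {fA : HomOn A E} {fB : HomOn B E} (hfA : fA.Injective)
    (hA : ∀ i, fA.RestrictsTo (L i) (f i)) (hB : ∀ i, fB.RestrictsTo (L i) (f i))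
    (V : Opens Y) :
    LinearMap.range (fB.app V le_top) ≤ LinearMap.range (fA.app V le_top) := by
  let 𝒰 : Set (Opens Y) := {W | W ≤ V ∧ ∃ i, W ≤ U i}
  have hV : V ≤ sSup 𝒰 := by
    intro y hy
    obtain ⟨i, hi⟩ := Opens.mem_iSup.mp (hcov.ge trivial)
    exact Opens.mem_sSup.mpr ⟨V ⊓ U i, ⟨inf_le_left, i, inf_le_right⟩, hy, hi⟩
  rintro _ ⟨x, rfl⟩
  refine mem_range_of_forall_res_mem_range hfA 𝒰 (fun W hW => hW.1) hV _ fun W hW => ?_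
  obtain ⟨i, hi⟩ := hW.2
  rw [← fB.naturality]
  exact (hA i).range_le (hB i) W hi ⟨_, rfl⟩

@[ext]
theorem IsoOn.ext {L : ModSheafOn 𝒪 (⊤ : Opens Y)} {L' : ModSheafOn 𝒪 U₀} {φ ψ : IsoOn L L'}
    (h : ∀ V hV x, φ.app V hV x = ψ.app V hV x) : φ = ψ := by
  obtain ⟨φ, _⟩ := φ
  obtain ⟨ψ, _⟩ := ψ
  have : φ = ψ := funext fun V => funext fun hV => LinearEquiv.ext (h V hV)
  subst this
  rfl

theorem IsoOn.ext_of_injective {fA : HomOn A E} (hfA : fA.Injective) {φ ψ : IsoOn B A}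
    (h : ∀ V x, fA.app V le_top (φ.app V le_top x) = fA.app V le_top (ψ.app V le_top x)) :
    φ = ψ :=
  IsoOn.ext fun V _ x => hfA V le_top (h V x)

noncomputable def IsoOn.ofRangeEq {fA : HomOn A E} {fB : HomOn B E}
    (hfA : fA.Injective) (hfB : fB.Injective)
    (hrange : ∀ V, LinearMap.range (fB.app V le_top) = LinearMap.range (fA.app V le_top)) :
    IsoOn B A where
  app V _ := LinearEquiv.ofRangeEq (hfA V le_top) (hfB V le_top) (hrange V)
  naturality := by
    intro U V _ hVU x
    apply hfA V le_top
    rw [fA.naturality, LinearEquiv.apply_ofRangeEq, LinearEquiv.apply_ofRangeEq, fB.naturality]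

@[simp]
theorem IsoOn.app_ofRangeEq {fA : HomOn A E} {fB : HomOn B E}
    (hfA : fA.Injective) (hfB : fB.Injective)
    (hrange : ∀ V, LinearMap.range (fB.app V le_top) = LinearMap.range (fA.app V le_top))
    (V : Opens Y) (x : B.M V le_top) :
    fA.app V le_top ((IsoOn.ofRangeEq hfA hfB hrange).app V le_top x) = fB.app V le_top x :=
  LinearEquiv.apply_ofRangeEq _ _ _ x

end SubsheafImage

theorem glue_line_subsheaves_unique_general
    {ι : Type u} (U : ι → Opens Y) (hcov : iSup U = ⊤)
    (E : ModSheafOn 𝒪 (⊤ : Opens Y))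
    (L : ∀ i, ModSheafOn 𝒪 (U i))
    (f : ∀ i, HomOn (L i) E)
    -- the two pairs `(Lg, fg)` and `(Lg', fg')`
    (Lg : ModSheafOn 𝒪 (⊤ : Opens Y)) (fg : HomOn Lg E)
    (hfg : fg.Injective)
    (hrest : ∀ i, ∃ h : IsoOn Lg (L i),
      ∀ (V : Opens Y) (hV : V ≤ U i) (x : Lg.M V le_top),
        fg.app V le_top x = (f i).app V hV (h.app V hV x))
    (Lg' : ModSheafOn 𝒪 (⊤ : Opens Y)) (fg' : HomOn Lg' E)
    (hfg' : fg'.Injective)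
    (hrest' : ∀ i, ∃ h : IsoOn Lg' (L i),
      ∀ (V : Opens Y) (hV : V ≤ U i) (x : Lg'.M V le_top),
        fg'.app V le_top x = (f i).app V hV (h.app V hV x)) :
    ∃! φ : IsoOn Lg' Lg,
      ∀ (V : Opens Y) (x : Lg'.M V le_top),
        fg'.app V le_top x = fg.app V le_top (φ.app V le_top x) := by
  have hrange V : LinearMap.range (fg'.app V le_top) = LinearMap.range (fg.app V le_top) :=
    le_antisymm (HomOn.range_le_of_restrictsTo hcov hfg hrest hrest' V)
      (HomOn.range_le_of_restrictsTo hcov hfg' hrest' hrest V)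
  refine ⟨IsoOn.ofRangeEq hfg hfg' hrange, fun V x => (IsoOn.app_ofRangeEq _ _ _ V x).symm,
    fun φ hφ => IsoOn.ext_of_injective hfg fun V x => ?_⟩
  rw [← hφ, IsoOn.app_ofRangeEq]

/-- (Uniqueness in the gluing lemma for line subsheaves.)  With the hypotheses of the gluing
lemma (`Y` a space with a sheaf of rings `𝒪`, `E` a sheaf of `𝒪`-modules, `(U i)` an open
cover, and line bundles `L i` on `U i` with injective maps `f i : L i → E|_{U i}` agreeing on
overlaps up to multiplication by units): if `(Lg, fg)` and `(Lg', fg')` are two pairs, each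
consisting of a line bundle on `Y` with an injective map into `E`, which both restrict over
every `U i` to `(L i, f i)` up to isomorphism, then there exists a unique `𝒪`-linear
isomorphism `φ : Lg' → Lg` with `fg' = fg ∘ φ`. -/
theorem glue_line_subsheaves_unique
    {ι : Type u} (U : ι → Opens Y) (hcov : iSup U = ⊤)
    (h𝒪 : 𝒪.IsSheaf)
    (E : ModSheafOn 𝒪 (⊤ : Opens Y))
    (L : ∀ i, ModSheafOn 𝒪 (U i))
    (hL : ∀ i, IsLineBundleOn (L i))
    (f : ∀ i, HomOn (L i) E)
    (hf : ∀ i, (f i).Injective)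
    (hglue : ∀ i j, ∃ (ψ : ∀ (V : Opens Y) (h : V ≤ U i ⊓ U j),
        (L j).M V (h.trans inf_le_right) ≃ₗ[𝒪.R V] (L i).M V (h.trans inf_le_left))
      (_ : ∀ (V W : Opens Y) (hV : V ≤ U i ⊓ U j) (hWV : W ≤ V)
          (x : (L j).M V (hV.trans inf_le_right)),
          ψ W (hWV.trans hV) ((L j).res (hV.trans inf_le_right) hWV x) =
            (L i).res (hV.trans inf_le_left) hWV (ψ V hV x))
      (g : (𝒪.R (U i ⊓ U j))ˣ),
      ∀ (V : Opens Y) (h : V ≤ U i ⊓ U j) (x : (L j).M V (h.trans inf_le_right)),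
        (f i).app V (h.trans inf_le_left) (ψ V h x) =
          𝒪.res h (g : 𝒪.R (U i ⊓ U j)) • (f j).app V (h.trans inf_le_right) x)
    -- the two pairs `(Lg, fg)` and `(Lg', fg')`
    (Lg : ModSheafOn 𝒪 (⊤ : Opens Y)) (fg : HomOn Lg E)
    (hLg : IsLineBundleOn Lg) (hfg : fg.Injective)
    (hrest : ∀ i, ∃ h : IsoOn Lg (L i),
      ∀ (V : Opens Y) (hV : V ≤ U i) (x : Lg.M V le_top),
        fg.app V le_top x = (f i).app V hV (h.app V hV x))
    (Lg' : ModSheafOn 𝒪 (⊤ : Opens Y)) (fg' : HomOn Lg' E)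
    (hLg' : IsLineBundleOn Lg') (hfg' : fg'.Injective)
    (hrest' : ∀ i, ∃ h : IsoOn Lg' (L i),
      ∀ (V : Opens Y) (hV : V ≤ U i) (x : Lg'.M V le_top),
        fg'.app V le_top x = (f i).app V hV (h.app V hV x)) :
    ∃! φ : IsoOn Lg' Lg,
      ∀ (V : Opens Y) (x : Lg'.M V le_top),
        fg'.app V le_top x = fg.app V le_top (φ.app V le_top x) :=
  glue_line_subsheaves_unique_general U hcov E L f Lg fg hfg hrest Lg' fg' hfg' hrest'
end

section
/- Let φ : M → N be a map of finite free modules over a commutative ring R, representing a two-term complex computing cohomology of a flat family after base change. Let Q = coker(φ^∨ : N^∨ → M^∨). Then for every R-algebra A there is a natural bijection, functorial in A, between Hom_A(Q ⊗_R A, A) and ker(φ ⊗_R A : M ⊗_R A → N ⊗_R A), equivariant under scalar multiplication by A^×. -/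
/-!
Over a finite projective `R`-module `M`, evaluation identifies `A ⊗[R] M` with
`Hom_R(M^∨, A)`, naturally in the `R`-algebra `A`. An `A`-linear form on `A ⊗[R] Q` is an
`R`-linear map `Q → A`, i.e. an `R`-linear map `M^∨ → A` killing the image of `φ^∨`; under the
identification above, precomposing with `φ^∨` becomes `φ ⊗ A`, so these maps are exactly the
elements of `ker(φ ⊗ A)`, vanishing in `A ⊗[R] N` being detected by evaluation as well.
Equivariance and naturality follow because elements of `A ⊗[R] M` are determined
by their pairings with `M^∨`.
-/

open TensorProduct

/-- The evaluation pairing: a functional `ξ : M → R` induces, for any `R`-algebra `A`,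
a map `M ⊗_R A → A` (written with the algebra factor on the left),
`a ⊗ m ↦ a • algebraMap R A (ξ m)`. -/
noncomputable def evalPairing (R A M : Type) [CommRing R] [CommRing A] [Algebra R A]
    [AddCommGroup M] [Module R M] (ξ : Module.Dual R M) : (A ⊗[R] M) →ₗ[R] A :=
  TensorProduct.lift ((LinearMap.mul R A).compl₂ ((Algebra.linearMap R A) ∘ₗ ξ))

def Submodule.liftQEquiv {R M P : Type*} [Ring R] [AddCommGroup M] [Module R M]
    [AddCommGroup P] [Module R P] (p : Submodule R M) :
    {f : M →ₗ[R] P // p ≤ LinearMap.ker f} ≃ (M ⧸ p →ₗ[R] P) where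
  toFun f := p.liftQ f f.2
  invFun g := ⟨g ∘ₗ p.mkQ, fun x hx => by simp [(Submodule.Quotient.mk_eq_zero p).2 hx]⟩
  left_inv f := Subtype.ext (p.liftQ_mkQ f.1 f.2)
  right_inv g := Submodule.linearMap_qext p rfl

variable {R : Type} [CommRing R]

section evalPairing

variable {A M : Type} [CommRing A] [Algebra R A] [AddCommGroup M] [Module R M]

lemma evalPairing_tmul (ξ : Module.Dual R M) (a : A) (m : M) :
    evalPairing R A M ξ (a ⊗ₜ m) = a * algebraMap R A (ξ m) := rfl

lemma evalPairing_smul (ξ : Module.Dual R M) (a : A) (x : A ⊗[R] M) :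
    evalPairing R A M ξ (a • x) = a * evalPairing R A M ξ x := by
  induction x using TensorProduct.induction_on with
  | zero => simp
  | tmul b m => rw [smul_tmul', evalPairing_tmul, evalPairing_tmul, smul_eq_mul, mul_assoc]
  | add x y hx hy => rw [smul_add, map_add, map_add, hx, hy, mul_add]

lemma evalPairing_rTensor {B : Type} [CommRing B] [Algebra R B] (g : A →ₐ[R] B)
    (ξ : Module.Dual R M) (x : A ⊗[R] M) :
    evalPairing R B M ξ (g.toLinearMap.rTensor M x) = g (evalPairing R A M ξ x) := by
  induction x using TensorProduct.induction_on with
  | zero => simp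
  | tmul a m => simp [evalPairing_tmul]
  | add x y hx hy => rw [map_add, map_add, hx, hy, map_add, map_add]

lemma evalPairing_baseChange {N : Type} [AddCommGroup N] [Module R N] (φ : M →ₗ[R] N)
    (η : Module.Dual R N) (x : A ⊗[R] M) :
    evalPairing R A N η (φ.baseChange A x) = evalPairing R A M (φ.dualMap η) x := by
  induction x using TensorProduct.induction_on with
  | zero => simp
  | tmul a m => rfl
  | add x y hx hy => rw [map_add, map_add, hx, hy, map_add]

variable [Module.Projective R M] [Module.Finite R M]

variable (R A M) in
noncomputable def evalPairingEquiv : A ⊗[R] M ≃ₗ[R] (Module.Dual R M →ₗ[R] A) :=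
  TensorProduct.comm R A M ≪≫ₗ (Module.evalEquiv R M).rTensor A ≪≫ₗ
    dualTensorHomEquiv R (Module.Dual R M) A

lemma evalPairingEquiv_apply (x : A ⊗[R] M) (ξ : Module.Dual R M) :
    evalPairingEquiv R A M x ξ = evalPairing R A M ξ x := by
  induction x using TensorProduct.induction_on with
  | zero => simp
  | tmul a m => simp [evalPairingEquiv, evalPairing_tmul, Algebra.smul_def, mul_comm]
  | add x y hx hy => simp only [map_add, LinearMap.add_apply, hx, hy]

lemma evalPairing_evalPairingEquiv_symm (f : Module.Dual R M →ₗ[R] A) (ξ : Module.Dual R M) :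
    evalPairing R A M ξ ((evalPairingEquiv R A M).symm f) = f ξ := by
  rw [← evalPairingEquiv_apply, LinearEquiv.apply_symm_apply]

lemma ext_evalPairing {x y : A ⊗[R] M}
    (h : ∀ ξ, evalPairing R A M ξ x = evalPairing R A M ξ y) : x = y :=
  (evalPairingEquiv R A M).injective <| LinearMap.ext fun ξ => by
    rw [evalPairingEquiv_apply, evalPairingEquiv_apply, h]

end evalPairing

section cokernel

variable {M N : Type} [AddCommGroup M] [Module R M] [Module.Projective R M] [Module.Finite R M]
  [AddCommGroup N] [Module R N] [Module.Projective R N] [Module.Finite R N]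
  (φ : M →ₗ[R] N) (A : Type) [CommRing A] [Algebra R A]

lemma baseChange_eq_zero_iff_range_dualMap_le_ker (x : A ⊗[R] M) :
    φ.baseChange A x = 0 ↔
      LinearMap.range φ.dualMap ≤ LinearMap.ker (evalPairingEquiv R A M x) := by
  rw [LinearMap.range_le_ker_iff, ← (evalPairingEquiv R A N).map_eq_zero_iff,
    LinearMap.ext_iff, LinearMap.ext_iff]
  simp only [evalPairingEquiv_apply, evalPairing_baseChange, LinearMap.comp_apply,
    LinearMap.zero_apply]

noncomputable def cokerDualHomEquivKer :
    ((A ⊗[R] (Module.Dual R M ⧸ LinearMap.range φ.dualMap)) →ₗ[A] A) ≃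
      LinearMap.ker (φ.baseChange A) :=
  (LinearMap.liftBaseChangeEquiv A).symm.toEquiv.trans <|
    (Submodule.liftQEquiv _).symm.trans <|
      ((evalPairingEquiv R A M).toEquiv.subtypeEquiv fun x =>
        baseChange_eq_zero_iff_range_dualMap_le_ker φ A x).symm

lemma evalPairing_cokerDualHomEquivKer
    (ψ : (A ⊗[R] (Module.Dual R M ⧸ LinearMap.range φ.dualMap)) →ₗ[A] A)
    (ξ : Module.Dual R M) :
    evalPairing R A M ξ (cokerDualHomEquivKer φ A ψ : A ⊗[R] M) =
      ψ (1 ⊗ₜ Submodule.Quotient.mk ξ) :=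
  evalPairing_evalPairingEquiv_symm _ ξ

end cokernel

/-- (Key linear-algebra step behind Grothendieck's theory of the `Q`-sheaf, EGA III 7.7.8.)
Let `φ : M → N` be a map of finite free modules over a commutative ring `R` and let
`Q = coker(φ^∨ : N^∨ → M^∨)`.  Then for every `R`-algebra `A` there is a bijection, functorial
in `A` and equivariant under scalar multiplication by `Aˣ`, between `Hom_A(Q ⊗_R A, A)` and
`ker(φ ⊗_R A : M ⊗_R A → N ⊗_R A)`.  The bijection is given by evaluation: the homomorphism
`ψ` corresponding to `m ∈ ker(φ ⊗ A)` satisfies `ψ(ξ ⊗ 1) = ⟨ξ, m⟩` for every `ξ ∈ M^∨`. -/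
theorem q_module_represents_kernel
    {R M N : Type} [CommRing R]
    [AddCommGroup M] [Module R M] [Module.Free R M] [Module.Finite R M]
    [AddCommGroup N] [Module R N] [Module.Free R N] [Module.Finite R N]
    (φ : M →ₗ[R] N) :
    ∃ e : ∀ (A : Type) [CommRing A] [Algebra R A],
        ((A ⊗[R] (Module.Dual R M ⧸ LinearMap.range φ.dualMap)) →ₗ[A] A) ≃
          LinearMap.ker (LinearMap.baseChange A φ),
      -- the bijection is induced by the evaluation pairing
      (∀ (A : Type) [CommRing A] [Algebra R A]
        (ψ : (A ⊗[R] (Module.Dual R M ⧸ LinearMap.range φ.dualMap)) →ₗ[A] A)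
        (ξ : Module.Dual R M),
          ψ ((1 : A) ⊗ₜ[R] Submodule.Quotient.mk ξ) = evalPairing R A M ξ (e A ψ : A ⊗[R] M)) ∧
      -- equivariance under scalar multiplication by units of `A`
      (∀ (A : Type) [CommRing A] [Algebra R A] (u : Aˣ)
        (ψ : (A ⊗[R] (Module.Dual R M ⧸ LinearMap.range φ.dualMap)) →ₗ[A] A),
          (e A ((u : A) • ψ) : A ⊗[R] M) = (u : A) • (e A ψ : A ⊗[R] M)) ∧
      -- naturality in the `R`-algebra `A`
      (∀ (A B : Type) [CommRing A] [Algebra R A] [CommRing B] [Algebra R B] (g : A →ₐ[R] B)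
        (ψA : (A ⊗[R] (Module.Dual R M ⧸ LinearMap.range φ.dualMap)) →ₗ[A] A)
        (ψB : (B ⊗[R] (Module.Dual R M ⧸ LinearMap.range φ.dualMap)) →ₗ[B] B),
        (∀ q : Module.Dual R M ⧸ LinearMap.range φ.dualMap,
            ψB ((1 : B) ⊗ₜ[R] q) = g (ψA ((1 : A) ⊗ₜ[R] q))) →
          LinearMap.rTensor M g.toLinearMap (e A ψA : A ⊗[R] M) = (e B ψB : B ⊗[R] M)) := by
  refine ⟨cokerDualHomEquivKer φ, ?_, ?_, ?_⟩
  · intro A _ _ ψ ξ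
    exact (evalPairing_cokerDualHomEquivKer φ A ψ ξ).symm
  · intro A _ _ u ψ
    refine ext_evalPairing fun ξ => ?_
    rw [evalPairing_smul, evalPairing_cokerDualHomEquivKer, evalPairing_cokerDualHomEquivKer,
      LinearMap.smul_apply, smul_eq_mul]
  · intro A B _ _ _ _ g ψA ψB hψ
    refine ext_evalPairing fun ξ => ?_
    rw [evalPairing_rTensor, evalPairing_cokerDualHomEquivKer, evalPairing_cokerDualHomEquivKer,
      hψ]
end
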